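/- arXiv:1211.0880 — 2 statements merged into one kernel-verified Lean document; each statement's English description precedes it below -/
import Mathlib

section
/- Let g : [0, ∞) → ℝ be continuous, ℓ > 0, and L : ℝ² → ℝ² a symmetric linear map. Then ∫_{|z|≤ℓ} g(|z|) ⟨z, L z⟩² dz = (π/4)(∫₀^ℓ g(r) r⁵ dr)(2 tr(L²) + (tr L)²). -/
/-
In polar coordinates `z = r (cos θ, sin θ)` the integrand factors as
`g(r) r⁴ Q(θ)²` with `Q(θ) = a cos² θ + 2b sin θ cos θ + c sin² θ`, where `(a b; b c)` is the
matrix of `L`; with the Jacobian `r` the integral splits as `(∫₀^ℓ g(r) r⁵ dr) (∫_{-π}^{π} Q²)`.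
The angular integral is `(π/4)(3a² + 2ac + 3c² + 4b²)`, and this equals
`(π/4)(2 tr(L²) + (tr L)²)` since `tr L = a + c` and `tr(L²) = a² + 2b² + c²`.
-/

open scoped RealInnerProductSpace
open MeasureTheory Real Set

theorem integral_sq_quadratic_cos_sin (a b c : ℝ) :
    ∫ θ in -π..π, (a * cos θ ^ 2 + 2 * b * sin θ * cos θ + c * sin θ ^ 2) ^ 2
      = π / 4 * (3 * a ^ 2 + 2 * a * c + 3 * c ^ 2 + 4 * b ^ 2) := by
  set A : ℝ := (3 * a ^ 2 + 3 * c ^ 2 + 2 * a * c + 4 * b ^ 2) / 8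
  -- The integrand is its mean `A` plus the derivative of a trigonometric polynomial with equal
  -- values at `±π`; `H` is the resulting antiderivative.
  let H : ℝ → ℝ := fun θ ↦ A * θ + (a ^ 2 - A) * (sin θ * cos θ)
      + (2 * A - a ^ 2 - c ^ 2) * (sin θ ^ 3 * cos θ) - a * b * cos θ ^ 4 + b * c * sin θ ^ 4
  have hH (θ : ℝ) : HasDerivAt H
      ((a * cos θ ^ 2 + 2 * b * sin θ * cos θ + c * sin θ ^ 2) ^ 2) θ := by
    have hs := hasDerivAt_sin θ
    have hc := hasDerivAt_cos θ
    refine (((((hasDerivAt_id θ).const_mul A).add ((hs.mul hc).const_mul (a ^ 2 - A))).add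
      (((hs.pow 3).mul hc).const_mul (2 * A - a ^ 2 - c ^ 2))).sub
      ((hc.pow 4).const_mul (a * b))).add ((hs.pow 4).const_mul (b * c)) |>.congr_deriv ?_
    simp only [Pi.pow_apply, Nat.cast_ofNat, Nat.add_one_sub_one]
    linear_combination (-(A + (2 * A - a ^ 2) * sin θ ^ 2 + a ^ 2 * cos θ ^ 2)) *
      sin_sq_add_cos_sq θ
  rw [intervalIntegral.integral_eq_sub_of_hasDerivAt (fun θ _ ↦ hH θ)
    (by apply Continuous.intervalIntegrable; fun_prop)]
  simp only [H, sin_pi, cos_pi, sin_neg, cos_neg, A]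
  ring

theorem EuclideanSpace.norm_mul_cos_mul_sin (r θ : ℝ) : ‖!₂[r * cos θ, r * sin θ]‖ = |r| := by
  have : (r * cos θ) ^ 2 + (r * sin θ) ^ 2 = r ^ 2 := by
    linear_combination r ^ 2 * cos_sq_add_sin_sq θ
  simp [EuclideanSpace.norm_eq, Fin.sum_univ_two, this, sqrt_sq_eq_abs]

theorem setIntegral_closedBall_eq_polarCoord {E : Type*} [NormedAddCommGroup E]
    [NormedSpace ℝ E] (f : EuclideanSpace ℝ (Fin 2) → E) (ℓ : ℝ) :
    ∫ z in Metric.closedBall 0 ℓ, f z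
      = ∫ q in Ioc 0 ℓ ×ˢ Ioo (-π) π, q.1 • f !₂[q.1 * cos q.2, q.1 * sin q.2] := by
  let e : ℝ × ℝ ≃ᵐ EuclideanSpace ℝ (Fin 2) :=
    MeasurableEquiv.finTwoArrow.symm.trans (MeasurableEquiv.toLp 2 (Fin 2 → ℝ))
  have he : MeasurePreserving e volume volume :=
    (EuclideanSpace.volume_preserving_symm_measurableEquiv_toLp (Fin 2)).symm.comp
      (volume_preserving_finTwoArrow ℝ).symm
  have hnorm (q : ℝ × ℝ) : ‖e (polarCoord.symm q)‖ = |q.1| :=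
    EuclideanSpace.norm_mul_cos_mul_sin q.1 q.2
  have hT : Ioc 0 ℓ ×ˢ Ioo (-π) π ⊆ polarCoord.target := fun q hq ↦ ⟨hq.1.1, hq.2⟩
  rw [← he.setIntegral_preimage_emb e.measurableEmbedding,
    ← integral_indicator (e.measurable measurableSet_closedBall), ← integral_comp_polarCoord_symm,
    ← inter_eq_right.2 hT, ← setIntegral_indicator (measurableSet_Ioc.prod measurableSet_Ioo)]
  refine setIntegral_congr_fun polarCoord.open_target.measurableSet fun q hq ↦ ?_
  have hq₁ : 0 < q.1 := hq.1
  by_cases hℓ : q.1 ≤ ℓ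
  · rw [indicator_of_mem, indicator_of_mem]
    · rfl
    · exact ⟨⟨hq₁, hℓ⟩, hq.2⟩
    · rwa [mem_preimage, mem_closedBall_zero_iff, hnorm, abs_of_pos hq₁]
  · rw [indicator_of_notMem, indicator_of_notMem, smul_zero]
    · exact fun h ↦ hℓ h.1.2
    · rwa [mem_preimage, mem_closedBall_zero_iff, hnorm, abs_of_pos hq₁]

theorem setIntegral_closedBall_norm_mul_sq_quadratic (g : ℝ → ℝ) {ℓ : ℝ} (hℓ : 0 ≤ ℓ)
    (a b c : ℝ) :
    ∫ z in Metric.closedBall (0 : EuclideanSpace ℝ (Fin 2)) ℓ,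
        g ‖z‖ * (a * z 0 ^ 2 + 2 * b * z 0 * z 1 + c * z 1 ^ 2) ^ 2
      = π / 4 * (∫ r in 0..ℓ, g r * r ^ 5) * (3 * a ^ 2 + 2 * a * c + 3 * c ^ 2 + 4 * b ^ 2) := by
  let Q (θ : ℝ) : ℝ := (a * cos θ ^ 2 + 2 * b * sin θ * cos θ + c * sin θ ^ 2) ^ 2
  have hpolar : ∀ q ∈ Ioc 0 ℓ ×ˢ Ioo (-π) π,
      q.1 • (g ‖!₂[q.1 * cos q.2, q.1 * sin q.2]‖ * (a * (q.1 * cos q.2) ^ 2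
        + 2 * b * (q.1 * cos q.2) * (q.1 * sin q.2) + c * (q.1 * sin q.2) ^ 2) ^ 2)
      = g q.1 * q.1 ^ 5 * Q q.2 := by
    rintro ⟨r, θ⟩ ⟨⟨hr, -⟩, -⟩
    rw [EuclideanSpace.norm_mul_cos_mul_sin, abs_of_pos hr, smul_eq_mul]
    ring
  calc _ = ∫ q in Ioc 0 ℓ ×ˢ Ioo (-π) π, g q.1 * q.1 ^ 5 * Q q.2 := by
        rw [setIntegral_closedBall_eq_polarCoord]
        exact setIntegral_congr_fun (measurableSet_Ioc.prod measurableSet_Ioo) hpolar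
    _ = (∫ r in Ioc 0 ℓ, g r * r ^ 5) * ∫ θ in Ioo (-π) π, Q θ := by
      rw [Measure.volume_eq_prod, ← Measure.prod_restrict]
      exact integral_prod_mul (fun r ↦ g r * r ^ 5) Q
    _ = _ := by
      rw [← intervalIntegral.integral_of_le hℓ, ← integral_Ioc_eq_integral_Ioo,
        ← intervalIntegral.integral_of_le (by linarith [pi_pos]), integral_sq_quadratic_cos_sin]
      ring

namespace Matrix

variable {𝕜 n : Type*} [RCLike 𝕜] [Fintype n] [DecidableEq n]

theorem trace_toEuclideanLin (M : Matrix n n 𝕜) :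
    LinearMap.trace 𝕜 _ (toEuclideanLin M) = M.trace := by
  rw [toEuclideanLin_eq_toLin_orthonormal, trace_toLin_eq]

theorem toEuclideanLin_mul (M N : Matrix n n 𝕜) :
    toEuclideanLin (M * N) = toEuclideanLin M ∘ₗ toEuclideanLin N := by
  rw [toEuclideanLin_eq_toLin_orthonormal, toLin_mul _ (EuclideanSpace.basisFun n 𝕜).toBasis]

theorem inner_toEuclideanLin_self_fin_two (M : Matrix (Fin 2) (Fin 2) ℝ)
    (z : EuclideanSpace ℝ (Fin 2)) :
    ⟪z, toEuclideanLin M z⟫ = M 0 0 * z 0 ^ 2 + (M 0 1 + M 1 0) * z 0 * z 1 + M 1 1 * z 1 ^ 2 := by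
  simp [PiLp.inner_apply, mulVec, dotProduct, Fin.sum_univ_two]
  ring

end Matrix

theorem statement4_general (g : ℝ → ℝ) {ℓ : ℝ} (hℓ : 0 < ℓ)
    (L : EuclideanSpace ℝ (Fin 2) →ₗ[ℝ] EuclideanSpace ℝ (Fin 2)) (hL : L.IsSymmetric) :
    ∫ z in Metric.closedBall (0 : EuclideanSpace ℝ (Fin 2)) ℓ, g ‖z‖ * ⟪z, L z⟫ ^ 2
      = Real.pi / 4 * (∫ r in (0:ℝ)..ℓ, g r * r ^ 5) *
          (2 * LinearMap.trace ℝ _ (L ∘ₗ L) + (LinearMap.trace ℝ _ L) ^ 2) := by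
  obtain ⟨M, rfl⟩ := Matrix.toEuclideanLin.surjective L
  have hM : M 1 0 = M 0 1 := by
    simpa using (Matrix.isSymmetric_toEuclideanLin_iff.1 hL).apply 0 1
  have hQ (z : EuclideanSpace ℝ (Fin 2)) : ⟪z, Matrix.toEuclideanLin M z⟫
      = M 0 0 * z 0 ^ 2 + 2 * M 0 1 * z 0 * z 1 + M 1 1 * z 1 ^ 2 := by
    rw [Matrix.inner_toEuclideanLin_self_fin_two, hM]
    ring
  simp_rw [hQ]
  rw [setIntegral_closedBall_norm_mul_sq_quadratic g hℓ.le, ← Matrix.toEuclideanLin_mul,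
    Matrix.trace_toEuclideanLin, Matrix.trace_toEuclideanLin, Matrix.trace_fin_two,
    Matrix.trace_fin_two]
  simp only [Matrix.mul_apply, Fin.sum_univ_two, hM]
  ring

/-- For continuous `g`, `ℓ > 0` and a symmetric linear map `L` on `ℝ²`,
`∫_{|z|≤ℓ} g(|z|) ⟪z, L z⟫² dz = (π/4)(∫₀^ℓ g(r) r⁵ dr)(2 tr(L²) + (tr L)²)`. -/
theorem statement4 (g : ℝ → ℝ) (hg : ContinuousOn g (Set.Ici 0)) {ℓ : ℝ} (hℓ : 0 < ℓ)
    (L : EuclideanSpace ℝ (Fin 2) →ₗ[ℝ] EuclideanSpace ℝ (Fin 2)) (hL : L.IsSymmetric) :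
    ∫ z in Metric.closedBall (0 : EuclideanSpace ℝ (Fin 2)) ℓ, g ‖z‖ * ⟪z, L z⟫ ^ 2
      = Real.pi / 4 * (∫ r in (0:ℝ)..ℓ, g r * r ^ 5) *
          (2 * LinearMap.trace ℝ _ (L ∘ₗ L) + (LinearMap.trace ℝ _ L) ^ 2) :=
  statement4_general g hℓ L hL
end

section
/- For any linear map F on a 3-dimensional inner product space, the cofactor F^c := [F² - (tr F) F + (1/2)((tr F)² - tr(F²)) 1]ᵀ satisfies F^c (u × v) = (F u) × (F v) for all vectors u, v, where × is the cross product in ℝ³. -/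
/-!
Write `F` as a matrix `A` in the standard orthonormal basis, so that the adjoint becomes the
transpose. For a `3 × 3` matrix the cofactor expression is the adjugate of `A` (a coordinate
check, equivalent to Cayley–Hamilton), and `(A u) × (A v) = (adj A)ᵀ (u × v)` is a polynomial
identity in the entries of `A`, `u` and `v`.
-/

/-- The cross product on `EuclideanSpace ℝ (Fin 3)`, transported from `Fin 3 → ℝ`. -/
noncomputable def cross3 (u v : EuclideanSpace ℝ (Fin 3)) : EuclideanSpace ℝ (Fin 3) :=
  (WithLp.equiv 2 (Fin 3 → ℝ)).symm
    (crossProduct ((WithLp.equiv 2 (Fin 3 → ℝ)) u) ((WithLp.equiv 2 (Fin 3 → ℝ)) v))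

open scoped Matrix

namespace Matrix

theorem adjugate_fin_three_eq_mul_self_sub_trace_smul {K : Type*} [Field K] [NeZero (2 : K)]
    (A : Matrix (Fin 3) (Fin 3) K) :
    adjugate A = A * A - A.trace • A + ((1 / 2 : K) * (A.trace ^ 2 - (A * A).trace)) • 1 := by
  ext i j
  fin_cases i <;> fin_cases j <;>
    simp [adjugate_fin_three, trace_fin_three, mul_apply, Fin.sum_univ_three] <;>
    field_simp <;> ring

theorem cross_mulVec_mulVec {R : Type*} [CommRing R] (A : Matrix (Fin 3) (Fin 3) R)
    (u v : Fin 3 → R) : (A *ᵥ u) ⨯₃ (A *ᵥ v) = (adjugate A)ᵀ *ᵥ (u ⨯₃ v) := by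
  ext i
  fin_cases i <;>
    simp [adjugate_fin_three, cross_apply, mulVec, dotProduct, Fin.sum_univ_three] <;> ring

theorem trace_toLpLin {n R : Type*} [Fintype n] [DecidableEq n] [CommRing R] (p : ENNReal)
    (A : Matrix n n R) : LinearMap.trace R _ (toLpLin p p A) = A.trace := by
  rw [toLpLin_eq_toLin, trace_toLin_eq]

theorem toLpLin_adjugate_fin_three {K : Type*} [Field K] [NeZero (2 : K)] (p : ENNReal)
    (A : Matrix (Fin 3) (Fin 3) K) :
    toLpLin p p A.adjugate =
      toLpLin p p A ∘ₗ toLpLin p p A - LinearMap.trace K _ (toLpLin p p A) • toLpLin p p A +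
        ((1 / 2 : K) * (LinearMap.trace K _ (toLpLin p p A) ^ 2 -
          LinearMap.trace K _ (toLpLin p p A ∘ₗ toLpLin p p A))) • LinearMap.id := by
  rw [← toLpLin_mul_same, trace_toLpLin, trace_toLpLin, adjugate_fin_three_eq_mul_self_sub_trace_smul,
    map_add, map_sub, map_smul, map_smul, toLpLin_one]

end Matrix

theorem cross3_toEuclideanLin_apply (A : Matrix (Fin 3) (Fin 3) ℝ) (u v : EuclideanSpace ℝ (Fin 3)) :
    cross3 (A.toEuclideanLin u) (A.toEuclideanLin v) =
      A.adjugateᵀ.toEuclideanLin (cross3 u v) := by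
  simp [cross3, Matrix.toLpLin_apply, Matrix.cross_mulVec_mulVec]

/-- For any linear map `F` on a 3-dimensional inner product space, the
cofactor `F^c := [F² - (tr F) F + (1/2)((tr F)² - tr(F²)) 1]ᵀ` satisfies
`F^c (u × v) = (F u) × (F v)` for all `u, v`. -/
theorem statement11
    (F : EuclideanSpace ℝ (Fin 3) →ₗ[ℝ] EuclideanSpace ℝ (Fin 3)) :
    ∀ u v : EuclideanSpace ℝ (Fin 3),
      (LinearMap.adjoint
          (F ∘ₗ F - LinearMap.trace ℝ _ F • F +
            ((1 / 2 : ℝ) * ((LinearMap.trace ℝ _ F) ^ 2 - LinearMap.trace ℝ _ (F ∘ₗ F))) •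
              (LinearMap.id : EuclideanSpace ℝ (Fin 3) →ₗ[ℝ] EuclideanSpace ℝ (Fin 3))))
          (cross3 u v)
        = cross3 (F u) (F v) := by
  intro u v
  obtain ⟨A, rfl⟩ := Matrix.toEuclideanLin.surjective F
  rw [← Matrix.toLpLin_adjugate_fin_three, ← Matrix.toEuclideanLin_conjTranspose_eq_adjoint,
    Matrix.conjTranspose_eq_transpose_of_trivial, cross3_toEuclideanLin_apply]
end
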